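/- Let t₁, t₂, t₃ > 0 satisfy the strict triangle inequalities 2·max(t₁,t₂,t₃) < t₁ + t₂ + t₃, let P₁, P₂ > 0, and set P₃ = P₁ − P₂. Then there exists exactly one quadruple (x₁,x₂,x₃,h) ∈ ℝ⁴ with h > 0 and x₁ < x₃ < x₂ satisfying the Young–Laplace equations 4t₁x₁/(h² + x₁²) = −P₁, 4t₂x₂/(h² + x₂²) = P₂, 4t₃x₃/(h² + x₃²) = P₃, together with the cosine balance equation t₁(h²−x₁²)/(h²+x₁²) + t₂(h²−x₂²)/(h²+x₂²) + t₃(h²−x₃²)/(h²+x₃²) = 0. Moreover, in this solution h² = (t₁+t₂+t₃)(t₂+t₃−t₁)(t₃+t₁−t₂)(t₁+t₂−t₃) / ((P₁t₂ − P₂t₁)² + P₁P₂(t₁−t₂+t₃)(t₂−t₁+t₃)). -/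

import Mathlib

/-!
Put `xᵢ / h = tan (θᵢ / 2)`. Then the Young–Laplace equations fix the sines of the contact
angles, `2 tᵢ sin θᵢ = pᵢ h` with `p = (-P₁, P₂, P₁ - P₂)`, and since `∑ pᵢ = 0` the cosine
balance says that the tension forces `tᵢ (cos θᵢ, sin θᵢ)` close up into a triangle. Squaring the
law of cosines in this triangle eliminates the angles and leaves an equation that is linear in
`h²`, whence the formula for `h` and then the sines. Each cosine is then fixed up to sign, the
balance forces a common sign, and flipping it replaces every `xᵢ` by `h² / xᵢ`, which cannot
preserve `x₁ < x₃ < x₂`. For existence the cosines are written down explicitly; the ordering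
comes down to the triangle inequality.
-/

namespace CellDoublet

lemma eq_or_eq_neg_of_sq_eq_sq_of_add_eq_zero {a₁ a₂ a₃ b₁ b₂ b₃ : ℝ}
    (ha : a₁ + a₂ + a₃ = 0) (hb : b₁ + b₂ + b₃ = 0)
    (h₁ : b₁ ^ 2 = a₁ ^ 2) (h₂ : b₂ ^ 2 = a₂ ^ 2) (h₃ : b₃ ^ 2 = a₃ ^ 2) :
    (b₁ = a₁ ∧ b₂ = a₂ ∧ b₃ = a₃) ∨ (b₁ = -a₁ ∧ b₂ = -a₂ ∧ b₃ = -a₃) := by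
  rcases sq_eq_sq_iff_eq_or_eq_neg.1 h₁ with rfl | rfl <;>
  rcases sq_eq_sq_iff_eq_or_eq_neg.1 h₂ with rfl | rfl <;>
  rcases sq_eq_sq_iff_eq_or_eq_neg.1 h₃ with rfl | rfl <;>
  first
  | exact .inl ⟨by linarith, by linarith, by linarith⟩
  | exact .inr ⟨by linarith, by linarith, by linarith⟩

lemma neg_and_pos_of_mul_eq_of_lt {a b a' b' k : ℝ} (hk : 0 < k) (ha : a * a' = k)
    (hb : b * b' = k) (hab : a < b) (hab' : a' < b') : a < 0 ∧ 0 < b := by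
  have hprod : a * b * (b' - a') = k * (a - b) := by linear_combination a * hb - b * ha
  have : a * b < 0 := by nlinarith
  constructor <;> nlinarith

lemma neg_lt_of_sq_add_sq_eq {a b k : ℝ} (h : a ^ 2 + b ^ 2 = k ^ 2) (hb : b ≠ 0) (hk : 0 ≤ k) :
    -k < a :=
  (abs_lt_of_sq_lt_sq' (by linarith [sq_pos_of_ne_zero hb]) hk).1

lemma lt_add_of_two_mul_max_lt {t₁ t₂ t₃ : ℝ} (h : 2 * max (max t₁ t₂) t₃ < t₁ + t₂ + t₃) :
    t₁ < t₂ + t₃ ∧ t₂ < t₃ + t₁ ∧ t₃ < t₁ + t₂ := by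
  have h₁ : t₁ ≤ max (max t₁ t₂) t₃ := le_max_of_le_left (le_max_left t₁ t₂)
  have h₂ : t₂ ≤ max (max t₁ t₂) t₃ := le_max_of_le_left (le_max_right t₁ t₂)
  have h₃ : t₃ ≤ max (max t₁ t₂) t₃ := le_max_right _ _
  exact ⟨by linarith, by linarith, by linarith⟩

/-- With `x / h = tan (θ / 2)`, `capCos h x = cos θ` and `capSin h x = sin θ`, where `θ` is the
contact angle at the junction circle of radius `h` of the spherical cap with apex `x`. -/
noncomputable def capCos (h x : ℝ) : ℝ := (h ^ 2 - x ^ 2) / (h ^ 2 + x ^ 2)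

noncomputable def capSin (h x : ℝ) : ℝ := 2 * h * x / (h ^ 2 + x ^ 2)

section CapAngle

variable {h x y a b k : ℝ}

lemma capCos_sq_add_capSin_sq (hh : h ≠ 0) (x : ℝ) : capCos h x ^ 2 + capSin h x ^ 2 = 1 := by
  have : h ^ 2 + x ^ 2 ≠ 0 := by positivity
  unfold capCos capSin
  field_simp
  ring

lemma neg_one_lt_capCos (hh : h ≠ 0) (x : ℝ) : -1 < capCos h x := by
  unfold capCos
  rw [lt_div_iff₀ (by positivity)]
  nlinarith [sq_pos_of_ne_zero hh]

lemma div_eq_iff_two_mul_capSin (hh : h ≠ 0) {t P : ℝ} :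
    4 * t * x / (h ^ 2 + x ^ 2) = P ↔ 2 * t * capSin h x = P * h := by
  have : h ^ 2 + x ^ 2 ≠ 0 := by positivity
  unfold capSin
  constructor <;> intro e <;> field_simp at e ⊢ <;> linear_combination e

lemma mul_capSin_div_one_add_capCos (hh : h ≠ 0) (x : ℝ) :
    h * capSin h x / (1 + capCos h x) = x := by
  have : h ^ 2 + x ^ 2 ≠ 0 := by positivity
  have : 1 + capCos h x ≠ 0 := by linarith [neg_one_lt_capCos hh x]
  unfold capCos capSin at *
  field_simp
  ring

lemma eq_of_capCos_eq_of_capSin_eq (hh : h ≠ 0) (hc : capCos h y = capCos h x)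
    (hs : capSin h y = capSin h x) : y = x := by
  rw [← mul_capSin_div_one_add_capCos hh y, hc, hs, mul_capSin_div_one_add_capCos hh x]

lemma capCos_sq_eq_of_capSin_eq (hh : h ≠ 0) (hs : capSin h y = capSin h x) :
    capCos h y ^ 2 = capCos h x ^ 2 := by
  linear_combination capCos_sq_add_capSin_sq hh y - capCos_sq_add_capSin_sq hh x
    - (capSin h y + capSin h x) * hs

lemma mul_eq_sq_of_capCos_eq_neg (hh : h ≠ 0) (hc : capCos h y = -capCos h x)
    (hs : capSin h y = capSin h x) : x * y = h ^ 2 := by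
  have : h ^ 2 + x ^ 2 ≠ 0 := by positivity
  have : h ^ 2 + y ^ 2 ≠ 0 := by positivity
  simp only [capCos, capSin] at hc hs
  field_simp at hc hs
  have hprod : (x * y - h ^ 2) * (x * y + h ^ 2) = 0 := by linear_combination -hc / 2
  have hdiff : (y - x) * (h ^ 2 - x * y) = 0 := by linear_combination hs
  rcases mul_eq_zero.mp hdiff with hxy | hxy
  · rw [show y = x by linarith] at hprod ⊢
    nlinarith [sq_nonneg x, sq_pos_of_ne_zero hh]
  · linarith

lemma capCos_mul_div_add (hh : h ≠ 0) (hk : k ≠ 0) (hka : k + a ≠ 0)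
    (habk : a ^ 2 + b ^ 2 = k ^ 2) : capCos h (h * b / (k + a)) = a / k := by
  unfold capCos
  field_simp
  linear_combination -(k + a) * habk

lemma capSin_mul_div_add (hh : h ≠ 0) (hk : k ≠ 0) (hka : k + a ≠ 0)
    (habk : a ^ 2 + b ^ 2 = k ^ 2) : capSin h (h * b / (k + a)) = b / k := by
  unfold capSin
  field_simp
  linear_combination -b * habk

end CapAngle

def IsEquilibrium (t₁ t₂ t₃ P₁ P₂ x₁ x₂ x₃ h : ℝ) : Prop :=
  4 * t₁ * x₁ / (h ^ 2 + x₁ ^ 2) = -P₁ ∧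
  4 * t₂ * x₂ / (h ^ 2 + x₂ ^ 2) = P₂ ∧
  4 * t₃ * x₃ / (h ^ 2 + x₃ ^ 2) = P₁ - P₂ ∧
  t₁ * (h ^ 2 - x₁ ^ 2) / (h ^ 2 + x₁ ^ 2) + t₂ * (h ^ 2 - x₂ ^ 2) / (h ^ 2 + x₂ ^ 2) +
    t₃ * (h ^ 2 - x₃ ^ 2) / (h ^ 2 + x₃ ^ 2) = 0

lemma isEquilibrium_iff {t₁ t₂ t₃ P₁ P₂ x₁ x₂ x₃ h : ℝ} (hh : h ≠ 0) :
    IsEquilibrium t₁ t₂ t₃ P₁ P₂ x₁ x₂ x₃ h ↔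
      2 * t₁ * capSin h x₁ = -P₁ * h ∧ 2 * t₂ * capSin h x₂ = P₂ * h ∧
      2 * t₃ * capSin h x₃ = (P₁ - P₂) * h ∧
      t₁ * capCos h x₁ + t₂ * capCos h x₂ + t₃ * capCos h x₃ = 0 := by
  rw [IsEquilibrium, div_eq_iff_two_mul_capSin hh, div_eq_iff_two_mul_capSin hh,
    div_eq_iff_two_mul_capSin hh]
  simp only [mul_div_assoc]
  rfl

/-- Sixteen times the squared area of the triangle with sides `t₁ t₂ t₃` (Heron). -/
def heron (t₁ t₂ t₃ : ℝ) : ℝ := (t₁ + t₂ + t₃) * (t₂ + t₃ - t₁) * (t₃ + t₁ - t₂) * (t₁ + t₂ - t₃)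

def pressureForm (t₁ t₂ t₃ P₁ P₂ : ℝ) : ℝ :=
  (P₁ * t₂ - P₂ * t₁) ^ 2 + P₁ * P₂ * (t₁ - t₂ + t₃) * (t₂ - t₁ + t₃)

section Triangle

variable {t₁ t₂ t₃ P₁ P₂ : ℝ}

lemma heron_pos (h₁ : t₁ < t₂ + t₃) (h₂ : t₂ < t₃ + t₁) (h₃ : t₃ < t₁ + t₂) :
    0 < heron t₁ t₂ t₃ := by
  unfold heron
  have : 0 < t₁ + t₂ + t₃ := by linarith
  have : 0 < t₂ + t₃ - t₁ := by linarith
  have : 0 < t₃ + t₁ - t₂ := by linarith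
  have : 0 < t₁ + t₂ - t₃ := by linarith
  positivity

lemma pressureForm_pos (hP₁ : 0 < P₁) (hP₂ : 0 < P₂) (h₁ : t₁ < t₂ + t₃) (h₂ : t₂ < t₃ + t₁) :
    0 < pressureForm t₁ t₂ t₃ P₁ P₂ := by
  have : 0 < t₁ - t₂ + t₃ := by linarith
  have : 0 < t₂ - t₁ + t₃ := by linarith
  unfold pressureForm
  positivity

lemma pressureForm_swap : pressureForm t₂ t₁ t₃ P₂ P₁ = pressureForm t₁ t₂ t₃ P₁ P₂ := by
  unfold pressureForm
  ring

end Triangle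

section Equilibrium

variable {t₁ t₂ t₃ P₁ P₂ h : ℝ}

lemma sq_mul_pressureForm_eq_heron {c₁ c₂ c₃ s₁ s₂ s₃ : ℝ}
    (hcs₁ : c₁ ^ 2 + s₁ ^ 2 = 1) (hcs₂ : c₂ ^ 2 + s₂ ^ 2 = 1) (hcs₃ : c₃ ^ 2 + s₃ ^ 2 = 1)
    (hs₁ : 2 * t₁ * s₁ = -P₁ * h) (hs₂ : 2 * t₂ * s₂ = P₂ * h)
    (hs₃ : 2 * t₃ * s₃ = (P₁ - P₂) * h) (hc : t₁ * c₁ + t₂ * c₂ + t₃ * c₃ = 0) :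
    h ^ 2 * pressureForm t₁ t₂ t₃ P₁ P₂ = heron t₁ t₂ t₃ := by
  have hs : t₁ * s₁ + t₂ * s₂ + t₃ * s₃ = 0 := by linear_combination (hs₁ + hs₂ + hs₃) / 2
  have hc₁ : 4 * t₁ ^ 2 * c₁ ^ 2 = 4 * t₁ ^ 2 - P₁ ^ 2 * h ^ 2 := by
    linear_combination 4 * t₁ ^ 2 * hcs₁ - (2 * t₁ * s₁ - P₁ * h) * hs₁
  have hc₂ : 4 * t₂ ^ 2 * c₂ ^ 2 = 4 * t₂ ^ 2 - P₂ ^ 2 * h ^ 2 := by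
    linear_combination 4 * t₂ ^ 2 * hcs₂ - (2 * t₂ * s₂ + P₂ * h) * hs₂
  -- the law of cosines in the triangle of forces `tᵢ (cᵢ, sᵢ)`
  have hc₁₂ : 4 * t₁ * t₂ * (c₁ * c₂) = 2 * (t₃ ^ 2 - t₁ ^ 2 - t₂ ^ 2) + P₁ * P₂ * h ^ 2 := by
    linear_combination 2 * (t₁ * c₁ + t₂ * c₂ - t₃ * c₃) * hc
      + 2 * (t₁ * s₁ + t₂ * s₂ - t₃ * s₃) * hs - 2 * t₁ ^ 2 * hcs₁ - 2 * t₂ ^ 2 * hcs₂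
      + 2 * t₃ ^ 2 * hcs₃ - 2 * t₂ * s₂ * hs₁ + P₁ * h * hs₂
  have hsq : (2 * (t₃ ^ 2 - t₁ ^ 2 - t₂ ^ 2) + P₁ * P₂ * h ^ 2) ^ 2
      = (4 * t₁ ^ 2 - P₁ ^ 2 * h ^ 2) * (4 * t₂ ^ 2 - P₂ ^ 2 * h ^ 2) := by
    rw [← hc₁₂, ← hc₁, ← hc₂]
    ring
  unfold pressureForm heron
  linear_combination hsq / 4

lemma sq_eq_heron_div_of_isEquilibrium {x₁ x₂ x₃ : ℝ} (hh : h ≠ 0)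
    (hD : pressureForm t₁ t₂ t₃ P₁ P₂ ≠ 0) (hx : IsEquilibrium t₁ t₂ t₃ P₁ P₂ x₁ x₂ x₃ h) :
    h ^ 2 = heron t₁ t₂ t₃ / pressureForm t₁ t₂ t₃ P₁ P₂ := by
  obtain ⟨hs₁, hs₂, hs₃, hc⟩ := (isEquilibrium_iff hh).1 hx
  rw [eq_div_iff hD]
  exact sq_mul_pressureForm_eq_heron (capCos_sq_add_capSin_sq hh x₁)
    (capCos_sq_add_capSin_sq hh x₂) (capCos_sq_add_capSin_sq hh x₃) hs₁ hs₂ hs₃ hc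

lemma eq_of_isEquilibrium {x₁ x₂ x₃ y₁ y₂ y₃ : ℝ} (hh : h ≠ 0) (ht₁ : t₁ ≠ 0) (ht₂ : t₂ ≠ 0)
    (ht₃ : t₃ ≠ 0) (hx : IsEquilibrium t₁ t₂ t₃ P₁ P₂ x₁ x₂ x₃ h)
    (hy : IsEquilibrium t₁ t₂ t₃ P₁ P₂ y₁ y₂ y₃ h) (hx₁₃ : x₁ < x₃) (hx₃₂ : x₃ < x₂)
    (hy₁₃ : y₁ < y₃) (hy₃₂ : y₃ < y₂) : y₁ = x₁ ∧ y₂ = x₂ ∧ y₃ = x₃ := by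
  obtain ⟨hx₁, hx₂, hx₃, hxc⟩ := (isEquilibrium_iff hh).1 hx
  obtain ⟨hy₁, hy₂, hy₃, hyc⟩ := (isEquilibrium_iff hh).1 hy
  have hs₁ : capSin h y₁ = capSin h x₁ := mul_left_cancel₀ (by positivity) (hy₁.trans hx₁.symm)
  have hs₂ : capSin h y₂ = capSin h x₂ := mul_left_cancel₀ (by positivity) (hy₂.trans hx₂.symm)
  have hs₃ : capSin h y₃ = capSin h x₃ := mul_left_cancel₀ (by positivity) (hy₃.trans hx₃.symm)
  rcases eq_or_eq_neg_of_sq_eq_sq_of_add_eq_zero hxc hyc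
      (by rw [mul_pow, mul_pow, capCos_sq_eq_of_capSin_eq hh hs₁])
      (by rw [mul_pow, mul_pow, capCos_sq_eq_of_capSin_eq hh hs₂])
      (by rw [mul_pow, mul_pow, capCos_sq_eq_of_capSin_eq hh hs₃])
    with ⟨hc₁, hc₂, hc₃⟩ | ⟨hc₁, hc₂, hc₃⟩
  · exact ⟨eq_of_capCos_eq_of_capSin_eq hh (mul_left_cancel₀ ht₁ hc₁) hs₁,
      eq_of_capCos_eq_of_capSin_eq hh (mul_left_cancel₀ ht₂ hc₂) hs₂,
      eq_of_capCos_eq_of_capSin_eq hh (mul_left_cancel₀ ht₃ hc₃) hs₃⟩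
  -- otherwise every `yᵢ` is the inversion `h² / xᵢ`, which reverses the order on each side of 0
  · have hh2 : 0 < h ^ 2 := by positivity
    have hxy₁ := mul_eq_sq_of_capCos_eq_neg hh
      (mul_left_cancel₀ ht₁ (hc₁.trans (mul_neg _ _).symm)) hs₁
    have hxy₂ := mul_eq_sq_of_capCos_eq_neg hh
      (mul_left_cancel₀ ht₂ (hc₂.trans (mul_neg _ _).symm)) hs₂
    have hxy₃ := mul_eq_sq_of_capCos_eq_neg hh
      (mul_left_cancel₀ ht₃ (hc₃.trans (mul_neg _ _).symm)) hs₃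
    have := (neg_and_pos_of_mul_eq_of_lt hh2 hxy₁ hxy₃ hx₁₃ hy₁₃).2
    have := (neg_and_pos_of_mul_eq_of_lt hh2 hxy₃ hxy₂ hx₃₂ hy₃₂).1
    linarith

end Equilibrium

section Existence

variable {t₁ t₂ t₃ P₁ P₂ h : ℝ}

lemma exists_isEquilibrium_of_forces {a₁ a₂ a₃ : ℝ} (ht₁ : 0 < t₁) (ht₂ : 0 < t₂)
    (ht₃ : 0 < t₃) (hP₁ : 0 < P₁) (hP₂ : 0 < P₂) (hh : 0 < h)
    (ha₁ : a₁ ^ 2 + (-P₁ * h) ^ 2 = (2 * t₁) ^ 2) (ha₂ : a₂ ^ 2 + (P₂ * h) ^ 2 = (2 * t₂) ^ 2)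
    (ha₃ : a₃ ^ 2 + ((P₁ - P₂) * h) ^ 2 = (2 * t₃) ^ 2) (hsum : a₁ + a₂ + a₃ = 0)
    (h₁₃ : -P₁ * (2 * t₃ + a₃) < (P₁ - P₂) * (2 * t₁ + a₁))
    (h₃₂ : (P₁ - P₂) * (2 * t₂ + a₂) < P₂ * (2 * t₃ + a₃)) :
    ∃ x₁ x₂ x₃, x₁ < x₃ ∧ x₃ < x₂ ∧ IsEquilibrium t₁ t₂ t₃ P₁ P₂ x₁ x₂ x₃ h := by
  have hk₁ : 0 < 2 * t₁ + a₁ := by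
    linarith [neg_lt_of_sq_add_sq_eq ha₁ (mul_ne_zero (neg_ne_zero.2 hP₁.ne') hh.ne')
      (by positivity)]
  have hk₂ : 0 < 2 * t₂ + a₂ := by
    linarith [neg_lt_of_sq_add_sq_eq ha₂ (mul_pos hP₂ hh).ne' (by positivity)]
  -- otherwise the two orderings would force opposite signs on `P₁ - P₂`
  have hk₃ : 0 < 2 * t₃ + a₃ := by
    by_contra! hk₃
    have hP : 0 < P₁ - P₂ := pos_of_mul_pos_left
      ((mul_nonneg_of_nonpos_of_nonpos (neg_nonpos.2 hP₁.le) hk₃).trans_lt h₁₃) hk₁.le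
    linarith [mul_pos hP hk₂, mul_nonpos_of_nonneg_of_nonpos hP₂.le hk₃]
  have hc₁ := capCos_mul_div_add hh.ne' (by positivity) hk₁.ne' ha₁
  have hc₂ := capCos_mul_div_add hh.ne' (by positivity) hk₂.ne' ha₂
  have hc₃ := capCos_mul_div_add hh.ne' (by positivity) hk₃.ne' ha₃
  have hs₁ := capSin_mul_div_add hh.ne' (by positivity) hk₁.ne' ha₁
  have hs₂ := capSin_mul_div_add hh.ne' (by positivity) hk₂.ne' ha₂
  have hs₃ := capSin_mul_div_add hh.ne' (by positivity) hk₃.ne' ha₃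
  have hhh : 0 < h * h := by positivity
  refine ⟨h * (-P₁ * h) / (2 * t₁ + a₁), h * (P₂ * h) / (2 * t₂ + a₂),
    h * ((P₁ - P₂) * h) / (2 * t₃ + a₃), ?_, ?_, (isEquilibrium_iff hh.ne').2 ⟨?_, ?_, ?_, ?_⟩⟩
  · rw [div_lt_div_iff₀ hk₁ hk₃]
    nlinarith [mul_lt_mul_of_pos_left h₁₃ hhh]
  · rw [div_lt_div_iff₀ hk₃ hk₂]
    nlinarith [mul_lt_mul_of_pos_left h₃₂ hhh]
  · rw [hs₁]; field_simp
  · rw [hs₂]; field_simp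
  · rw [hs₃]; field_simp
  · rw [hc₁, hc₂, hc₃]
    field_simp
    linear_combination hsum

lemma pos_add_of_sq_eq_pressureForm {e : ℝ} (he : 0 < e)
    (he2 : e ^ 2 = pressureForm t₁ t₂ t₃ P₁ P₂) (ht₁ : 0 < t₁) (ht₂ : 0 < t₂) (ht₃ : 0 < t₃)
    (hP₁ : 0 < P₁) (h₂ : t₂ < t₃ + t₁) : 0 < P₁ * (t₁ + t₃) - P₂ * t₁ + e := by
  rcases le_or_gt P₂ P₁ with hP | hP
  · nlinarith [mul_nonneg (sub_nonneg.2 hP) ht₁.le, mul_pos hP₁ ht₃]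
  · have hpos : 0 < P₁ * (P₂ - P₁) * (t₁ + t₂ + t₃) * (t₃ + t₁ - t₂) := by
      have : 0 < P₂ - P₁ := sub_pos.2 hP
      have : 0 < t₃ + t₁ - t₂ := by linarith
      positivity
    have hlt : (P₁ * (t₁ + t₃) - P₂ * t₁) ^ 2 < e ^ 2 := by
      rw [he2, pressureForm]
      linear_combination hpos
    linarith [(abs_lt_of_sq_lt_sq' hlt he.le).1]

lemma exists_force_triangle {e : ℝ} (he : 0 < e) (he2 : e ^ 2 = pressureForm t₁ t₂ t₃ P₁ P₂)
    (hhe : (h * e) ^ 2 = heron t₁ t₂ t₃) (ht₁ : 0 < t₁) (ht₂ : 0 < t₂) (ht₃ : 0 < t₃)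
    (h₁ : t₁ < t₂ + t₃) (h₂ : t₂ < t₃ + t₁) (hP₁ : 0 < P₁) (hP₂ : 0 < P₂) :
    ∃ a₁ a₂ a₃ : ℝ, a₁ ^ 2 + (-P₁ * h) ^ 2 = (2 * t₁) ^ 2 ∧ a₂ ^ 2 + (P₂ * h) ^ 2 = (2 * t₂) ^ 2 ∧
      a₃ ^ 2 + ((P₁ - P₂) * h) ^ 2 = (2 * t₃) ^ 2 ∧ a₁ + a₂ + a₃ = 0 ∧
      -P₁ * (2 * t₃ + a₃) < (P₁ - P₂) * (2 * t₁ + a₁) ∧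
      (P₁ - P₂) * (2 * t₂ + a₂) < P₂ * (2 * t₃ + a₃) := by
  have hR₂ := pos_add_of_sq_eq_pressureForm he he2 ht₁ ht₂ ht₃ hP₁ h₂
  have hR₁ := pos_add_of_sq_eq_pressureForm he (he2.trans pressureForm_swap.symm) ht₂ ht₁ ht₃
    hP₂ (by linarith)
  rw [pressureForm] at he2
  rw [heron] at hhe
  -- `aᵢ / (2 tᵢ)` is the cosine of the contact angle of interface `i`
  refine ⟨(P₁ * (t₁ ^ 2 + t₂ ^ 2 - t₃ ^ 2) - 2 * P₂ * t₁ ^ 2) / e,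
    (P₂ * (t₁ ^ 2 + t₂ ^ 2 - t₃ ^ 2) - 2 * P₁ * t₂ ^ 2) / e,
    (P₁ * (t₂ ^ 2 + t₃ ^ 2 - t₁ ^ 2) + P₂ * (t₃ ^ 2 + t₁ ^ 2 - t₂ ^ 2)) / e, ?_, ?_, ?_, ?_, ?_, ?_⟩
  · field_simp
    linear_combination P₁ ^ 2 * hhe - 4 * t₁ ^ 2 * he2
  · field_simp
    linear_combination P₂ ^ 2 * hhe - 4 * t₂ ^ 2 * he2
  · field_simp
    linear_combination (P₁ - P₂) ^ 2 * hhe - 4 * t₃ ^ 2 * he2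
  · field_simp
    ring
  · refine sub_pos.1 ((mul_pos two_pos hR₂).trans_eq ?_)
    field_simp
    linear_combination 2 * he2
  · refine sub_pos.1 ((mul_pos two_pos hR₁).trans_eq ?_)
    field_simp
    linear_combination 2 * he2

lemma exists_isEquilibrium (ht₁ : 0 < t₁) (ht₂ : 0 < t₂) (ht₃ : 0 < t₃) (h₁ : t₁ < t₂ + t₃)
    (h₂ : t₂ < t₃ + t₁) (h₃ : t₃ < t₁ + t₂) (hP₁ : 0 < P₁) (hP₂ : 0 < P₂) :
    ∃ x₁ x₂ x₃ h, 0 < h ∧ x₁ < x₃ ∧ x₃ < x₂ ∧ IsEquilibrium t₁ t₂ t₃ P₁ P₂ x₁ x₂ x₃ h := by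
  have hD := pressureForm_pos hP₁ hP₂ h₁ h₂
  have hN := heron_pos h₁ h₂ h₃
  obtain ⟨e, he, he2⟩ : ∃ e, 0 < e ∧ e ^ 2 = pressureForm t₁ t₂ t₃ P₁ P₂ :=
    ⟨_, Real.sqrt_pos.2 hD, Real.sq_sqrt hD.le⟩
  obtain ⟨h, hh, hhe⟩ : ∃ h, 0 < h ∧ (h * e) ^ 2 = heron t₁ t₂ t₃ :=
    ⟨√(heron t₁ t₂ t₃) / e, by positivity, by rw [div_mul_cancel₀ _ he.ne', Real.sq_sqrt hN.le]⟩
  obtain ⟨a₁, a₂, a₃, ha₁, ha₂, ha₃, hsum, h₁₃, h₃₂⟩ :=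
    exists_force_triangle he he2 hhe ht₁ ht₂ ht₃ h₁ h₂ hP₁ hP₂
  obtain ⟨x₁, x₂, x₃, hx⟩ := exists_isEquilibrium_of_forces ht₁ ht₂ ht₃ hP₁ hP₂ hh
    ha₁ ha₂ ha₃ hsum h₁₃ h₃₂
  exact ⟨x₁, x₂, x₃, h, hh, hx⟩

end Existence

end CellDoublet

open CellDoublet

/-- For tensions satisfying the strict triangle inequalities and positive pressures
`P₁, P₂` (with `P₃ = P₁ − P₂`), there is exactly one quadruple `(x₁,x₂,x₃,h)` with
`h > 0` and `x₁ < x₃ < x₂` satisfying the Young–Laplace equations and the cosine balance;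
moreover `h²` is given by the stated closed formula. -/
theorem stmt_12 (t₁ t₂ t₃ P₁ P₂ : ℝ) (ht₁ : 0 < t₁) (ht₂ : 0 < t₂) (ht₃ : 0 < t₃)
    (htri : 2 * max (max t₁ t₂) t₃ < t₁ + t₂ + t₃) (hP₁ : 0 < P₁) (hP₂ : 0 < P₂) :
    (∃! p : ℝ × ℝ × ℝ × ℝ,
      0 < p.2.2.2 ∧ p.1 < p.2.2.1 ∧ p.2.2.1 < p.2.1 ∧
      4 * t₁ * p.1 / (p.2.2.2 ^ 2 + p.1 ^ 2) = -P₁ ∧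
      4 * t₂ * p.2.1 / (p.2.2.2 ^ 2 + p.2.1 ^ 2) = P₂ ∧
      4 * t₃ * p.2.2.1 / (p.2.2.2 ^ 2 + p.2.2.1 ^ 2) = P₁ - P₂ ∧
      t₁ * (p.2.2.2 ^ 2 - p.1 ^ 2) / (p.2.2.2 ^ 2 + p.1 ^ 2) +
        t₂ * (p.2.2.2 ^ 2 - p.2.1 ^ 2) / (p.2.2.2 ^ 2 + p.2.1 ^ 2) +
        t₃ * (p.2.2.2 ^ 2 - p.2.2.1 ^ 2) / (p.2.2.2 ^ 2 + p.2.2.1 ^ 2) = 0) ∧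
    (∀ x₁ x₂ x₃ h : ℝ,
      0 < h → x₁ < x₃ → x₃ < x₂ →
      4 * t₁ * x₁ / (h ^ 2 + x₁ ^ 2) = -P₁ →
      4 * t₂ * x₂ / (h ^ 2 + x₂ ^ 2) = P₂ →
      4 * t₃ * x₃ / (h ^ 2 + x₃ ^ 2) = P₁ - P₂ →
      t₁ * (h ^ 2 - x₁ ^ 2) / (h ^ 2 + x₁ ^ 2) + t₂ * (h ^ 2 - x₂ ^ 2) / (h ^ 2 + x₂ ^ 2) +
        t₃ * (h ^ 2 - x₃ ^ 2) / (h ^ 2 + x₃ ^ 2) = 0 →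
      h ^ 2 = (t₁ + t₂ + t₃) * (t₂ + t₃ - t₁) * (t₃ + t₁ - t₂) * (t₁ + t₂ - t₃) /
        ((P₁ * t₂ - P₂ * t₁) ^ 2 + P₁ * P₂ * (t₁ - t₂ + t₃) * (t₂ - t₁ + t₃))) := by
  obtain ⟨h₁, h₂, h₃⟩ := lt_add_of_two_mul_max_lt htri
  have hD := (pressureForm_pos hP₁ hP₂ h₁ h₂).ne'
  have hsq : ∀ x₁ x₂ x₃ h, 0 < h → IsEquilibrium t₁ t₂ t₃ P₁ P₂ x₁ x₂ x₃ h →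
      h ^ 2 = heron t₁ t₂ t₃ / pressureForm t₁ t₂ t₃ P₁ P₂ :=
    fun _ _ _ _ hh hx => sq_eq_heron_div_of_isEquilibrium hh.ne' hD hx
  obtain ⟨x₁, x₂, x₃, h, hh, hx₁₃, hx₃₂, hx⟩ := exists_isEquilibrium ht₁ ht₂ ht₃ h₁ h₂ h₃ hP₁ hP₂
  refine ⟨⟨(x₁, x₂, x₃, h), ⟨hh, hx₁₃, hx₃₂, hx⟩, ?_⟩,
    fun x₁ x₂ x₃ h hh _ _ e₁ e₂ e₃ e₄ => hsq x₁ x₂ x₃ h hh ⟨e₁, e₂, e₃, e₄⟩⟩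
  rintro ⟨y₁, y₂, y₃, g⟩ ⟨hg, hy₁₃, hy₃₂, hy⟩
  obtain rfl : g = h := (pow_left_inj₀ hg.le hh.le two_ne_zero).1
    ((hsq _ _ _ _ hg hy).trans (hsq _ _ _ _ hh hx).symm)
  obtain ⟨rfl, rfl, rfl⟩ :=
    eq_of_isEquilibrium hh.ne' ht₁.ne' ht₂.ne' ht₃.ne' hx hy hx₁₃ hx₃₂ hy₁₃ hy₃₂
  rfl
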